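/- arXiv:1405.1228 — 7 statements merged into one kernel-verified Lean document; each statement's English description precedes it below -/
import Mathlib

section
/- Let G be a transitive permutation group on a finite set Ω having a nontrivial abelian normal subgroup N with at most two orbits on Ω. Then N contains a nontrivial semiregular element. -/
/-- A permutation is semiregular if every nontrivial power is fixed-point-free,
i.e. all its cycles have the same length. -/
def Semiregular {Ω : Type*} (g : Equiv.Perm Ω) : Prop :=
  ∀ k : ℕ, g ^ k ≠ 1 → ∀ x : Ω, (g ^ k) x ≠ x

theorem stmt_2 {Ω : Type*} [Fintype Ω] (G N : Subgroup (Equiv.Perm Ω))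
    (htrans : ∀ a b : Ω, ∃ g ∈ G, g a = b)
    (hNG : N ≤ G)
    (hnormal : ∀ g ∈ G, ∀ n ∈ N, g * n * g⁻¹ ∈ N)
    (habel : ∀ m ∈ N, ∀ n ∈ N, m * n = n * m)
    (hnt : N ≠ ⊥)
    (horb : ∃ a b : Ω, ∀ x : Ω, (∃ n ∈ N, n a = x) ∨ (∃ n ∈ N, n b = x)) :
    ∃ n ∈ N, n ≠ 1 ∧ Semiregular n := by
  classical
  obtain ⟨a, b, hab⟩ := horb
  -- a fixed point in an orbit forces fixing the base point
  have key : ∀ n ∈ N, ∀ x : Ω, n x = x → n a = a ∨ n b = b := by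
    intro n hn x hx
    rcases hab x with ⟨m, hm, hma⟩ | ⟨m, hm, hmb⟩
    · left
      have hc := habel n hn m hm
      have h1 : n (m a) = m a := by rw [hma]; exact hx
      have h2 : m (n a) = m a := by
        have h3 : (m * n) a = m a := by rw [← hc]; simpa [Equiv.Perm.mul_apply] using h1
        simpa [Equiv.Perm.mul_apply] using h3
      exact m.injective h2
    · right
      have hc := habel n hn m hm
      have h1 : n (m b) = m b := by rw [hmb]; exact hx
      have h2 : m (n b) = m b := by
        have h3 : (m * n) b = m b := by rw [← hc]; simpa [Equiv.Perm.mul_apply] using h1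
        simpa [Equiv.Perm.mul_apply] using h3
      exact m.injective h2
  -- fixing both base points forces identity
  have triv : ∀ n ∈ N, n a = a → n b = b → n = 1 := by
    intro n hn ha hb
    ext x
    rcases hab x with ⟨m, hm, hma⟩ | ⟨m, hm, hmb⟩
    · have hc := habel n hn m hm
      have := congrArg (fun e : Equiv.Perm Ω => e a) hc
      simp only [Equiv.Perm.mul_apply] at this
      rw [← hma]
      simpa [ha] using this
    · have hc := habel n hn m hm
      have := congrArg (fun e : Equiv.Perm Ω => e b) hc
      simp only [Equiv.Perm.mul_apply] at this
      rw [← hmb]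
      simpa [hb] using this
  have pow_fix : ∀ (n : Equiv.Perm Ω) (c : Ω), n c = c → ∀ j : ℕ, (n ^ j) c = c := by
    intro n c h j
    induction j with
    | zero => simp
    | succ j ih => rw [pow_succ, Equiv.Perm.mul_apply, h, ih]
  by_cases hA : ∃ n ∈ N, n ≠ 1 ∧ n a = a
  · -- some nontrivial element fixes a; combine with its conjugate fixing b
    obtain ⟨n, hn, hn1, hna⟩ := hA
    obtain ⟨g, hgG, hg⟩ := htrans a b
    set y := g * n * g⁻¹ with hy_def
    have hyN : y ∈ N := hnormal g hgG n hn
    have hyb : y b = b := by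
      have hginv : g⁻¹ b = a := by rw [← hg]; simp
      simp only [hy_def, Equiv.Perm.mul_apply, hginv, hna, hg]
    have hcomm : Commute n y := habel n hn y hyN
    have hnb : n b ≠ b := fun h => hn1 (triv n hn hna h)
    refine ⟨n * y, N.mul_mem hn hyN, ?_, ?_⟩
    · intro h
      have : (n * y) b = b := by rw [h]; simp
      rw [Equiv.Perm.mul_apply, hyb] at this
      exact hnb this
    · intro k hk x hx
      have hpow : (n * y) ^ k = n ^ k * y ^ k := hcomm.mul_pow k
      have hypow : y ^ k = g * n ^ k * g⁻¹ := by
        rw [hy_def]; exact conj_pow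
      have hnka : (n ^ k) a = a := pow_fix n a hna k
      have hykb : (y ^ k) b = b := pow_fix y b hyb k
      have hmem : (n * y) ^ k ∈ N := N.pow_mem (N.mul_mem hn hyN) k
      have hnk1 : n ^ k = 1 := by
        rcases key _ hmem x hx with h | h
        · -- (n*y)^k a = a  ⇒  y^k a = a ⇒ y^k = 1 ⇒ n^k = 1
          have hcomm' : n ^ k * y ^ k = y ^ k * n ^ k := (hcomm.pow_pow k k)
          have : (y ^ k) ((n ^ k) a) = a := by
            have := congrArg (fun e : Equiv.Perm Ω => e a) (hpow.trans hcomm')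
            simp only [Equiv.Perm.mul_apply] at this
            rw [← this]; exact h
          rw [hnka] at this
          have hyk1 : y ^ k = 1 := triv _ (N.pow_mem hyN k) this hykb
          rw [hypow] at hyk1
          have : n ^ k = 1 := by
            have := congrArg (fun z => g⁻¹ * z * g) hyk1
            simpa [mul_assoc] using this
          exact this
        · -- (n*y)^k b = b ⇒ n^k b = b ⇒ n^k = 1
          have : (n ^ k) ((y ^ k) b) = b := by
            have := congrArg (fun e : Equiv.Perm Ω => e b) hpow
            simp only [Equiv.Perm.mul_apply] at this
            rw [← this]; exact h
          rw [hykb] at this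
          exact triv _ (N.pow_mem hn k) hnka this
      apply hk
      rw [hpow, hnk1, hypow, hnk1]
      simp
  · -- no nontrivial element of N fixes a: every nontrivial element is semiregular
    push_neg at hA
    have ⟨n, hn, hn1⟩ : ∃ n ∈ N, n ≠ 1 := by
      by_contra h
      push_neg at h
      exact hnt (Subgroup.ext fun x => ⟨fun hx => by simpa using h x hx,
        fun hx => by simp at hx; simpa [hx] using N.one_mem⟩)
    refine ⟨n, hn, hn1, ?_⟩
    intro k hk x hx
    have hmem : n ^ k ∈ N := N.pow_mem hn k
    rcases key _ hmem x hx with h | h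
    · exact hk (by_contra fun h1 => h1 (by exact absurd h (by
        have := hA (n ^ k) hmem
        exact fun hh => (fun h2 => h2 hh) (this (by exact fun he => hk he)))))
    · obtain ⟨g, hgG, hg⟩ := htrans b a
      have hyN : g * n ^ k * g⁻¹ ∈ N := hnormal g hgG _ hmem
      have hya : (g * n ^ k * g⁻¹) a = a := by
        have hginv : g⁻¹ a = b := by rw [← hg]; simp
        simp only [Equiv.Perm.mul_apply, hginv, h, hg]
      have hy1 : g * n ^ k * g⁻¹ = 1 := by
        by_contra hne
        exact (hA _ hyN hne) hya
      apply hk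
      have := congrArg (fun z => g⁻¹ * z * g) hy1
      simpa [mul_assoc] using this
end

section
/- Let σ generate a cyclic 2-group acting linearly on a finite-dimensional vector space V over 𝔽₂ of dimension n, making V an 𝔽₂⟨σ⟩-module. If the fixed subspace C_V(σ) has dimension 1, then for each i ∈ {0,1,…,n} there is exactly one σ-invariant subspace of V of dimension i, and these subspaces form a chain under inclusion. -/
open Module

section auxsec
variable {V : Type*} [AddCommGroup V] [Module (ZMod 2) V] [FiniteDimensional (ZMod 2) V]

lemma aux_ker_mono (f : Module.End (ZMod 2) V) {i j : ℕ} (h : i ≤ j) :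
    LinearMap.ker (f ^ i) ≤ LinearMap.ker (f ^ j) := by
  intro x hx
  rw [LinearMap.mem_ker] at hx ⊢
  have hj : f ^ j = f ^ (j - i) * f ^ i := by rw [← pow_add]; congr 1; omega
  rw [hj, Module.End.mul_apply, hx, map_zero]

lemma aux_step (f : Module.End (ZMod 2) V) (i : ℕ) :
    finrank (ZMod 2) (LinearMap.ker (f ^ (i + 1))) ≤
      finrank (ZMod 2) (LinearMap.ker (f ^ i)) + finrank (ZMod 2) (LinearMap.ker f) := by
  set K := LinearMap.ker (f ^ (i + 1)) with hK
  let g : K →ₗ[ZMod 2] V := (f ^ i).comp K.subtype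
  have h1 : finrank (ZMod 2) (LinearMap.range g) + finrank (ZMod 2) (LinearMap.ker g)
      = finrank (ZMod 2) K := LinearMap.finrank_range_add_finrank_ker g
  have h2 : LinearMap.range g ≤ LinearMap.ker f := by
    rintro x ⟨⟨y, hy⟩, rfl⟩
    rw [LinearMap.mem_ker]
    have he : f ((f ^ i) y) = (f ^ (i + 1)) y := by rw [pow_succ']; rfl
    rw [hK, LinearMap.mem_ker] at hy
    simpa [g, he] using hy
  have h3 : (LinearMap.ker g).map K.subtype ≤ LinearMap.ker (f ^ i) := by
    rintro x ⟨⟨y, hy⟩, hgy, rfl⟩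
    exact hgy
  have h4 : finrank (ZMod 2) (LinearMap.ker g) ≤ finrank (ZMod 2) (LinearMap.ker (f ^ i)) := by
    rw [← Submodule.finrank_map_subtype_eq K (LinearMap.ker g)]
    exact Submodule.finrank_mono h3
  have h5 : finrank (ZMod 2) (LinearMap.range g) ≤ finrank (ZMod 2) (LinearMap.ker f) :=
    Submodule.finrank_mono h2
  omega

lemma aux_two : (2 : Module.End (ZMod 2) V) = 0 := by
  ext v
  have h : ((2 : Module.End (ZMod 2) V)) v = v + v := by
    rw [show (2 : Module.End (ZMod 2) V) = 1 + 1 from (one_add_one_eq_two).symm,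
      LinearMap.add_apply, Module.End.one_apply]
  rw [h, LinearMap.zero_apply]
  have h2 : v + v = ((1 : ZMod 2) + 1) • v := by rw [add_smul, one_smul]
  rw [h2, show ((1 : ZMod 2) + 1) = 0 by decide, zero_smul]

lemma aux_pow (f : Module.End (ZMod 2) V) (m : ℕ) : (f - 1) ^ (2 ^ m) = f ^ (2 ^ m) - 1 := by
  induction m with
  | zero => simp
  | succ m ih =>
    have h2 : (2 : Module.End (ZMod 2) V) = 0 := aux_two
    have hneg : (-1 : Module.End (ZMod 2) V) = 1 := by
      rw [neg_eq_iff_add_eq_zero, one_add_one_eq_two, h2]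
    rw [pow_succ 2 m, pow_mul, ih, pow_mul]
    set B := f ^ (2 ^ m) with hB
    have expand : (B - 1) ^ 2 = B ^ 2 - 2 * B + 1 := by noncomm_ring
    rw [expand, h2, zero_mul, sub_zero, sub_eq_add_neg, hneg]

lemma aux_inv (f : Module.End (ZMod 2) V) (hnil : ∀ v : V, ∃ N, (f ^ N) v = 0) :
    ∀ d : ℕ, ∀ W : Submodule (ZMod 2) V, (∀ x ∈ W, f x ∈ W) → finrank (ZMod 2) W ≤ d →
      W ≤ LinearMap.ker (f ^ d) := by
  intro d
  induction d with
  | zero =>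
    intro W hW hd
    have : W = ⊥ := Submodule.finrank_eq_zero.mp (Nat.le_zero.mp hd)
    simp [this]
  | succ d ih =>
    intro W hW hd
    by_cases hbot : W = ⊥
    · rw [hbot]; exact bot_le
    · have hWinv : ∀ x ∈ W.map f, f x ∈ W.map f := by
        rintro x ⟨y, hy, rfl⟩
        exact ⟨f y, hW y hy, rfl⟩
      -- find a nonzero kernel element inside W
      obtain ⟨x, hxW, hx0⟩ := Submodule.exists_mem_ne_zero_of_ne_bot hbot
      have hxiter : ∀ j : ℕ, (f ^ j) x ∈ W := by
        intro j
        induction j with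
        | zero => simpa using hxW
        | succ j ihj => rw [pow_succ', Module.End.mul_apply]; exact hW _ ihj
      have hex : ∃ N, (f ^ N) x = 0 := hnil x
      classical
      set k := Nat.find hex with hk
      have hk0 : (f ^ k) x = 0 := Nat.find_spec hex
      have hkpos : k ≠ 0 := by
        intro h
        rw [h] at hk0
        simp at hk0
        exact hx0 hk0
      set y := (f ^ (k - 1)) x with hy
      have hy0 : y ≠ 0 := Nat.find_min hex (by omega)
      have hyW : y ∈ W := hxiter _
      have hfy : f y = 0 := by
        have : f ((f ^ (k - 1)) x) = (f ^ k) x := by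
          rw [← Module.End.mul_apply, ← pow_succ']
          congr 2
          omega
        rw [hy, this, hk0]
      -- rank-nullity for f restricted to W
      let g : W →ₗ[ZMod 2] V := f.comp W.subtype
      have h1 : finrank (ZMod 2) (LinearMap.range g) + finrank (ZMod 2) (LinearMap.ker g)
          = finrank (ZMod 2) W := LinearMap.finrank_range_add_finrank_ker g
      have hrange : LinearMap.range g = W.map f := by
        rw [LinearMap.range_comp, Submodule.range_subtype]
      have hkerne : LinearMap.ker g ≠ ⊥ := by
        intro h
        have : (⟨y, hyW⟩ : W) ∈ LinearMap.ker g := by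
          rw [LinearMap.mem_ker]
          exact hfy
        rw [h, Submodule.mem_bot] at this
        exact hy0 (congrArg Subtype.val this)
      have hkerpos : 0 < finrank (ZMod 2) (LinearMap.ker g) := by
        rcases Nat.eq_zero_or_pos (finrank (ZMod 2) (LinearMap.ker g)) with h | h
        · exact absurd (Submodule.finrank_eq_zero.mp h) hkerne
        · exact h
      have hrank : finrank (ZMod 2) (W.map f) ≤ d := by
        rw [← hrange]; omega
      have h2 := ih (W.map f) hWinv hrank
      intro z hz
      rw [LinearMap.mem_ker, pow_succ, Module.End.mul_apply]
      exact h2 ⟨z, hz, rfl⟩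

end auxsec

theorem stmt_5 {V : Type*} [AddCommGroup V] [Module (ZMod 2) V]
    [FiniteDimensional (ZMod 2) V]
    {n : ℕ} (hn : Module.finrank (ZMod 2) V = n)
    (σ : V ≃ₗ[ZMod 2] V)
    -- σ generates a cyclic 2-group:
    (hord : ∃ m : ℕ, orderOf σ = 2 ^ m)
    -- the fixed subspace C_V(σ) is 1-dimensional:
    (hfix : Module.finrank (ZMod 2)
        (LinearMap.ker ((σ : V →ₗ[ZMod 2] V) - LinearMap.id)) = 1) :
    -- V has exactly one σ-invariant subspace of each dimension i ∈ {0,…,n}: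
    (∀ i ≤ n, ∃! W : Submodule (ZMod 2) V,
        (∀ x ∈ W, σ x ∈ W) ∧ Module.finrank (ZMod 2) W = i) ∧
    -- and the σ-invariant subspaces form a chain under inclusion:
    (∀ W₁ W₂ : Submodule (ZMod 2) V, (∀ x ∈ W₁, σ x ∈ W₁) →
        (∀ x ∈ W₂, σ x ∈ W₂) → W₁ ≤ W₂ ∨ W₂ ≤ W₁) := by
  obtain ⟨m, hm⟩ := hord
  set s : Module.End (ZMod 2) V := (σ : V →ₗ[ZMod 2] V) with hs
  set f : Module.End (ZMod 2) V := s - 1 with hf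
  have hfid : f = (σ : V →ₗ[ZMod 2] V) - LinearMap.id := rfl
  -- coercion of powers
  have hcoe : ∀ k : ℕ, ((σ ^ k : V ≃ₗ[ZMod 2] V) : V →ₗ[ZMod 2] V) = s ^ k := by
    intro k
    induction k with
    | zero => rfl
    | succ k ihk => rw [pow_succ, pow_succ, ← ihk]; rfl
  -- nilpotency
  have hone : σ ^ (2 ^ m) = 1 := by rw [← hm]; exact pow_orderOf_eq_one σ
  have hspow : s ^ (2 ^ m) = 1 := by rw [← hcoe, hone]; rfl
  have hnilp : f ^ (2 ^ m) = 0 := by rw [hf, aux_pow, hspow, sub_self]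
  have hnil : ∀ v : V, ∃ N, (f ^ N) v = 0 := fun v => ⟨2 ^ m, by rw [hnilp]; rfl⟩
  -- f commutes with s
  have hcomm : Commute s f := by
    rw [hf]
    exact (Commute.refl s).sub_right (Commute.one_right s)
  -- σ-invariance iff f-invariance
  have hinv_of : ∀ W : Submodule (ZMod 2) V, (∀ x ∈ W, σ x ∈ W) → (∀ x ∈ W, f x ∈ W) := by
    intro W hW x hx
    have : f x = σ x - x := rfl
    rw [this]
    exact sub_mem (hW x hx) hx
  -- kernel of powers invariant under σ
  have hker_inv : ∀ i : ℕ, ∀ x ∈ LinearMap.ker (f ^ i), σ x ∈ LinearMap.ker (f ^ i) := by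
    intro i x hx
    rw [LinearMap.mem_ker] at hx ⊢
    have hc : (f ^ i) * s = s * (f ^ i) := ((hcomm.symm).pow_left i).eq
    have h' : (f ^ i) (s x) = s ((f ^ i) x) := by
      have hcx := LinearMap.congr_fun hc x
      simpa [Module.End.mul_apply] using hcx
    calc (f ^ i) (σ x) = (f ^ i) (s x) := rfl
      _ = s ((f ^ i) x) := h'
      _ = 0 := by rw [hx, map_zero]
  -- finrank of kernel powers
  have hle : ∀ i : ℕ, finrank (ZMod 2) (LinearMap.ker (f ^ i)) ≤ i := by
    intro i
    induction i with
    | zero =>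
      rw [pow_zero, Module.End.one_eq_id, LinearMap.ker_id]
      simp
    | succ i ihi =>
      have := aux_step f i
      rw [hfid] at this ⊢
      rw [← hfid] at this ⊢
      have h2 : finrank (ZMod 2) (LinearMap.ker f) = 1 := by rw [hfid]; exact hfix
      omega
  have hexact : ∀ i ≤ n, finrank (ZMod 2) (LinearMap.ker (f ^ i)) = i := by
    intro i hi
    induction i with
    | zero =>
      rw [pow_zero, Module.End.one_eq_id, LinearMap.ker_id]
      simp
    | succ i ihi =>
      have hih : finrank (ZMod 2) (LinearMap.ker (f ^ i)) = i := ihi (by omega)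
      have hne : LinearMap.ker (f ^ i) ≠ LinearMap.ker (f ^ (i + 1)) := by
        intro h
        have hconst := Module.End.ker_pow_constant h (2 ^ m)
        have : LinearMap.ker (f ^ (i + 2 ^ m)) = ⊤ := by
          have : f ^ (i + 2 ^ m) = 0 := by
            rw [pow_add, hnilp, mul_zero]
          rw [this, LinearMap.ker_zero]
        rw [← hconst] at this
        have : finrank (ZMod 2) (LinearMap.ker (f ^ i)) = n := by rw [this, finrank_top, hn]
        omega
      have hlt : LinearMap.ker (f ^ i) < LinearMap.ker (f ^ (i + 1)) :=
        lt_of_le_of_ne (aux_ker_mono f (by omega)) hne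
      have := Submodule.finrank_lt_finrank_of_lt hlt
      have := hle (i + 1)
      omega
  -- uniqueness core: any invariant subspace equals ker (f ^ finrank W)
  have hkey : ∀ W : Submodule (ZMod 2) V, (∀ x ∈ W, σ x ∈ W) →
      W = LinearMap.ker (f ^ (finrank (ZMod 2) W)) := by
    intro W hW
    have hWf := hinv_of W hW
    have hle' := aux_inv f hnil (finrank (ZMod 2) W) W hWf le_rfl
    have hWn : finrank (ZMod 2) W ≤ n := hn ▸ Submodule.finrank_le W
    have heq := hexact _ hWn
    exact Submodule.eq_of_le_of_finrank_le hle' (by omega)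
  constructor
  · intro i hi
    refine ⟨LinearMap.ker (f ^ i), ⟨hker_inv i, hexact i hi⟩, ?_⟩
    rintro W ⟨hWinv, hWrank⟩
    rw [hkey W hWinv, hWrank]
  · intro W₁ W₂ h1 h2
    have e1 := hkey W₁ h1
    have e2 := hkey W₂ h2
    rcases le_total (finrank (ZMod 2) W₁) (finrank (ZMod 2) W₂) with h | h
    · left; rw [e1, e2]; exact aux_ker_mono f h
    · right; rw [e1, e2]; exact aux_ker_mono f h
end

section
/- If r ≥ 4 is a power of 2, then the polynomial x^r + 1 over 𝔽₃ factors as a product of exactly two irreducible polynomials, each of degree r/2. -/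
/-!
Over `𝔽₃`, `X ^ (4n) + 1 = (X ^ (2n) - 1) ^ 2 - X ^ (2n) = (X ^ (2n) + X ^ n - 1) (X ^ (2n) - X ^ n - 1)`.
For `n = 2 ^ k`, `X ^ (4n) + 1` is the `2 ^ (k + 3)`-th cyclotomic polynomial, so a factor of it is
irreducible as soon as its degree is the order of `3` modulo `2 ^ (k + 3)`. Lifting the exponent
gives `v₂(3 ^ 2 ^ (j + 1) - 1) = j + 3`, hence that order is `2 ^ (k + 1) = 2n`.
-/

open Polynomial

section Trinomial

variable {R : Type*} [CommRing R] {n : ℕ} (c : R)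

theorem monic_X_pow_two_mul_add_C_mul_X_pow_sub_one [Nontrivial R] (hn : n ≠ 0) :
    (X ^ (2 * n) + C c * X ^ n - 1 : R[X]).Monic := by
  monicity!
  simp [show ¬2 * n ≤ n by omega, show n ≤ 2 * n by omega, hn]

theorem natDegree_X_pow_two_mul_add_C_mul_X_pow_sub_one [Nontrivial R] (hn : n ≠ 0) :
    (X ^ (2 * n) + C c * X ^ n - 1 : R[X]).natDegree = 2 * n := by
  compute_degree!
  · simp [show 2 * n ≠ n by omega, hn]
  all_goals omega

theorem coeff_X_pow_two_mul_add_C_mul_X_pow_sub_one (hn : n ≠ 0) :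
    (X ^ (2 * n) + C c * X ^ n - 1 : R[X]).coeff n = c := by
  simp [coeff_X_pow, coeff_one, hn, show n ≠ 2 * n by omega]

end Trinomial

theorem X_pow_four_mul_add_one_eq_mul {R : Type*} [CommRing R] [CharP R 3] (n : ℕ) :
    (X ^ (4 * n) + 1 : R[X]) =
      (X ^ (2 * n) + C 1 * X ^ n - 1) * (X ^ (2 * n) + C (-1) * X ^ n - 1) := by
  have h3 : (3 : R[X]) = 0 := by exact_mod_cast CharP.cast_eq_zero R[X] 3
  simp only [map_one, map_neg]
  linear_combination (X : R[X]) ^ (2 * n) * h3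

theorem cyclotomic_two_pow_succ (R : Type*) [CommRing R] (k : ℕ) :
    cyclotomic (2 ^ (k + 1)) R = X ^ 2 ^ k + 1 := by
  rw [cyclotomic_prime_pow_eq_geom_sum Nat.prime_two]
  simp [Finset.sum_range_succ, add_comm]

theorem padicValNat_three_pow_two_pow_sub_one (k : ℕ) :
    padicValNat 2 (3 ^ 2 ^ (k + 1) - 1) = k + 3 := by
  have := padicValNat.pow_two_sub_one (x := 3) (n := 2 ^ (k + 1)) (by norm_num) (by norm_num)
    (by positivity) (by simp [Nat.even_pow])
  rw [show 3 + 1 = 2 ^ 2 by rfl, show 3 - 1 = 2 ^ 1 by rfl, padicValNat.prime_pow,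
    padicValNat.prime_pow, padicValNat.prime_pow] at this
  omega

theorem unitOfCoprime_three_pow_eq_one_iff {k : ℕ} (h : Nat.Coprime 3 (2 ^ k)) (m : ℕ) :
    ZMod.unitOfCoprime 3 h ^ m = 1 ↔ 2 ^ k ∣ 3 ^ m - 1 := by
  rw [← Nat.modEq_iff_dvd' (Nat.one_le_pow _ _ (by norm_num)), ← ZMod.natCast_eq_natCast_iff,
    Units.ext_iff]
  simp [eq_comm]

theorem orderOf_unitOfCoprime_three (k : ℕ) (h : Nat.Coprime 3 (2 ^ (k + 3))) :
    orderOf (ZMod.unitOfCoprime 3 h) = 2 ^ (k + 1) := by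
  refine orderOf_eq_prime_pow ?_ ?_ <;>
    rw [unitOfCoprime_three_pow_eq_one_iff,
      padicValNat_dvd_iff_le (Nat.sub_ne_zero_of_lt (Nat.one_lt_pow (by positivity) (by norm_num)))]
  · cases k with
    | zero => simp
    | succ j => rw [padicValNat_three_pow_two_pow_sub_one]; omega
  · rw [padicValNat_three_pow_two_pow_sub_one]

theorem irreducible_of_dvd_X_pow_four_mul_two_pow_add_one {k : ℕ} {P : (ZMod 3)[X]}
    (hP : P ∣ X ^ (4 * 2 ^ k) + 1) (hdeg : P.natDegree = 2 * 2 ^ k) : Irreducible P := by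
  have h3 : ¬3 ∣ 2 ^ (k + 3) :=
    Nat.prime_three.coprime_iff_not_dvd.mp (Nat.Coprime.pow_right _ (by norm_num))
  rw [show 4 * 2 ^ k = 2 ^ (k + 2) by ring, ← cyclotomic_two_pow_succ] at hP
  rw [← pow_succ'] at hdeg
  exact ZMod.irreducible_of_dvd_cyclotomic_of_natDegree h3 hP
    (hdeg.trans (orderOf_unitOfCoprime_three k _).symm)

open Polynomial in
theorem stmt_8 (a : ℕ) (ha : 2 ≤ a) :
    ∃ f g : Polynomial (ZMod 3), f.Monic ∧ g.Monic ∧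
      Irreducible f ∧ Irreducible g ∧
      f.natDegree = 2 ^ a / 2 ∧ g.natDegree = 2 ^ a / 2 ∧
      f ≠ g ∧ (X ^ (2 ^ a) + 1 : Polynomial (ZMod 3)) = f * g := by
  obtain ⟨k, rfl⟩ : ∃ k, a = k + 2 := ⟨a - 2, by omega⟩
  have hn : 2 ^ k ≠ 0 := by positivity
  rw [show 2 ^ (k + 2) = 4 * 2 ^ k by ring, show 4 * 2 ^ k / 2 = 2 * 2 ^ k by omega]
  have hfactor := X_pow_four_mul_add_one_eq_mul (R := ZMod 3) (2 ^ k)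
  have hdeg (c : ZMod 3) := natDegree_X_pow_two_mul_add_C_mul_X_pow_sub_one c hn
  refine ⟨_, _, monic_X_pow_two_mul_add_C_mul_X_pow_sub_one 1 hn,
    monic_X_pow_two_mul_add_C_mul_X_pow_sub_one (-1) hn,
    irreducible_of_dvd_X_pow_four_mul_two_pow_add_one (hfactor ▸ dvd_mul_right _ _) (hdeg 1),
    irreducible_of_dvd_X_pow_four_mul_two_pow_add_one (hfactor ▸ dvd_mul_left _ _) (hdeg (-1)),
    hdeg 1, hdeg (-1), fun h ↦ ?_, hfactor⟩
  have := congrArg (coeff · (2 ^ k)) h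
  simp only [coeff_X_pow_two_mul_add_C_mul_X_pow_sub_one _ hn] at this
  exact absurd this (by decide)
end

section
/- With r a power of 2, r ≥ 4, let S = ℤ₃^r with coordinates indexed by ℤ_r, and let ρ act on S by (x_0,…,x_{r−1}) ↦ (x_1, x_2, …, x_{r−1}, −x_0). Then the only nonzero proper ρ-invariant subgroups of S are N = {(x+y, x, y, x−y) : x,y ∈ ℤ₃^{r/4}} and N* = {(−x+y, x, y, x+y) : x,y ∈ ℤ₃^{r/4}} (blocks of length r/4 each). -/
/-- The twisted cyclic shift ρ on S = ℤ₃^r (coordinates indexed by ℤ_r):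
`(x_0,…,x_{r−1}) ↦ (x_1, x_2, …, x_{r−1}, −x_0)`. -/
def rhoAct (r : ℕ) (n : ZMod r → ZMod 3) : ZMod r → ZMod 3 :=
  fun i => if i + 1 = 0 then -n (i + 1) else n (i + 1)

/-- N = {(x+y, x, y, x−y) : x, y ∈ ℤ₃^{r/4}}, in four blocks of length r/4. -/
def Nset (r : ℕ) : Set (ZMod r → ZMod 3) :=
  {n | ∃ x y : Fin (r / 4) → ZMod 3, ∀ i : Fin (r / 4),
    n ((i : ℕ) : ZMod r) = x i + y i ∧
    n ((((i : ℕ) + r / 4 : ℕ)) : ZMod r) = x i ∧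
    n ((((i : ℕ) + r / 2 : ℕ)) : ZMod r) = y i ∧
    n ((((i : ℕ) + 3 * (r / 4) : ℕ)) : ZMod r) = x i - y i}

/-- N* = {(−x+y, x, y, x+y) : x, y ∈ ℤ₃^{r/4}}, in four blocks of length r/4. -/
def NstarSet (r : ℕ) : Set (ZMod r → ZMod 3) :=
  {n | ∃ x y : Fin (r / 4) → ZMod 3, ∀ i : Fin (r / 4),
    n ((i : ℕ) : ZMod r) = -x i + y i ∧
    n ((((i : ℕ) + r / 4 : ℕ)) : ZMod r) = x i ∧
    n ((((i : ℕ) + r / 2 : ℕ)) : ZMod r) = y i ∧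
    n ((((i : ℕ) + 3 * (r / 4) : ℕ)) : ZMod r) = x i + y i}

/-!
Over `𝔽₃` the map `ρ` satisfies `ρ ^ r = -1`, and with `q = r / 4`
`X ^ r + 1 = (X ^ (2q) + X ^ q - 1) (X ^ (2q) - X ^ q - 1)`, two coprime factors. Both are
irreducible: a root of either has multiplicative order `2r` in a field of `3 ^ d` elements, and `3`
has order `r / 2` modulo `2r`, so `d ≥ r / 2`. On the `r`-antiperiodic sequence unrolling a vector,
`ρ` acts as the shift, so the kernel of either factor evaluated at `ρ` consists of solutions of a
linear recurrence of order `r / 2`; it has dimension at most `r / 2` and is `N`, resp. `N*`.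
Hence `S = N ⊕ N*` with both summands simple `𝔽₃[ρ]`-modules, and the only invariant subgroups
are `0`, `N`, `N*` and `S`.
-/

open Polynomial Module

namespace Module.End

variable {K V : Type*} [Field K] [AddCommGroup V] [Module K V] (T : Module.End K V)

theorem aeval_apply_mem_of_mem_invtSubmodule {W : Submodule K V} (hW : W ∈ T.invtSubmodule)
    (p : K[X]) {v : V} (hv : v ∈ W) : aeval T p v ∈ W := by
  induction p using Polynomial.induction_on generalizing v with
  | C a => simpa using W.smul_mem a hv
  | add p q hp hq => simpa using W.add_mem (hp hv) (hq hv)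
  | monomial n a ih =>
    rw [pow_succ, ← mul_assoc, aeval_mul, aeval_X, mul_apply]
    exact ih (hW hv)

theorem ker_aeval_mem_invtSubmodule (p : K[X]) : LinearMap.ker (aeval T p) ∈ T.invtSubmodule := by
  intro v hv
  have hcomm := ((Commute.all X p).map (aeval T)).eq
  rw [aeval_X] at hcomm
  rw [Submodule.mem_comap, LinearMap.mem_ker, ← mul_apply, ← hcomm, mul_apply,
    LinearMap.mem_ker.1 hv, map_zero]

theorem disjoint_or_ker_aeval_le [FiniteDimensional K V] {p : K[X]} (hp : Irreducible p)
    (hker : finrank K (LinearMap.ker (aeval T p)) ≤ p.natDegree) {W : Submodule K V}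
    (hW : W ∈ T.invtSubmodule) :
    Disjoint W (LinearMap.ker (aeval T p)) ∨ LinearMap.ker (aeval T p) ≤ W := by
  rw [or_iff_not_imp_left, Submodule.disjoint_def]
  push Not
  rintro ⟨v, hvW, hvp, hv0⟩
  let orbit : K[X]_p.natDegree →ₗ[K] V :=
    (LinearMap.applyₗ v ∘ₗ (aeval T).toLinearMap) ∘ₗ (degreeLT K p.natDegree).subtype
  -- a nonzero `c` of degree `< deg p` is coprime to the irreducible `p`, so `c(T) v ≠ 0`
  have horbit_inj : Function.Injective orbit := by
    refine (injective_iff_map_eq_zero orbit).2 fun ⟨c, hc⟩ hcv => Subtype.ext ?_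
    by_contra hc0
    have hcop : IsCoprime p c := hp.coprime_iff_not_dvd.2 fun hdvd =>
      (natDegree_le_of_dvd hdvd hc0).not_gt ((natDegree_lt_iff_degree_lt hc0).2 (mem_degreeLT.1 hc))
    exact hv0 (Submodule.disjoint_def.1 (disjoint_ker_aeval_of_isCoprime T hcop) v hvp hcv)
  have hrange : LinearMap.range orbit ≤ W ⊓ LinearMap.ker (aeval T p) := by
    rintro _ ⟨⟨c, -⟩, rfl⟩
    refine ⟨aeval_apply_mem_of_mem_invtSubmodule T hW c hvW, ?_⟩
    change aeval T p (aeval T c v) = 0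
    rw [← mul_apply, ← aeval_mul, mul_comm, aeval_mul, mul_apply, LinearMap.mem_ker.1 hvp, map_zero]
  have hinf : W ⊓ LinearMap.ker (aeval T p) = LinearMap.ker (aeval T p) := by
    refine Submodule.eq_of_le_of_finrank_le inf_le_right ?_
    calc finrank K (LinearMap.ker (aeval T p)) ≤ p.natDegree := hker
      _ = finrank K (K[X]_p.natDegree) := by
        rw [(degreeLTEquiv K _).finrank_eq, Module.finrank_fin_fun]
      _ = finrank K (LinearMap.range orbit) := (LinearMap.finrank_range_of_inj horbit_inj).symm
      _ ≤ finrank K ↥(W ⊓ LinearMap.ker (aeval T p)) := Submodule.finrank_mono hrange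
  exact hinf ▸ inf_le_left

theorem le_inf_ker_aeval_sup_inf_ker_aeval {f g : K[X]} (hfg : IsCoprime f g)
    (h0 : aeval T (f * g) = 0) {W : Submodule K V} (hW : W ∈ T.invtSubmodule) :
    W ≤ W ⊓ LinearMap.ker (aeval T f) ⊔ W ⊓ LinearMap.ker (aeval T g) := by
  obtain ⟨s, t, hst⟩ := hfg
  intro w hw
  have hkill : ∀ u : K[X], aeval T (u * (f * g)) w = 0 := fun u => by
    rw [aeval_mul, mul_apply, h0, LinearMap.zero_apply, map_zero]
  rw [← one_apply (R := K) w, ← map_one (aeval (R := K) T), ← hst, map_add, LinearMap.add_apply,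
    add_comm]
  refine Submodule.add_mem_sup ⟨aeval_apply_mem_of_mem_invtSubmodule T hW _ hw, ?_⟩
    ⟨aeval_apply_mem_of_mem_invtSubmodule T hW _ hw, ?_⟩
  · rw [SetLike.mem_coe, LinearMap.mem_ker, ← mul_apply, ← aeval_mul,
      show f * (t * g) = t * (f * g) by ring, hkill]
  · rw [SetLike.mem_coe, LinearMap.mem_ker, ← mul_apply, ← aeval_mul,
      show g * (s * f) = s * (f * g) by ring, hkill]

theorem finrank_ker_aeval_eq_natDegree [FiniteDimensional K V] {f g : K[X]} (hfg : IsCoprime f g)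
    (h0 : aeval T (f * g) = 0) (hfk : finrank K (LinearMap.ker (aeval T f)) ≤ f.natDegree)
    (hgk : finrank K (LinearMap.ker (aeval T g)) ≤ g.natDegree)
    (hV : finrank K V = f.natDegree + g.natDegree) :
    finrank K (LinearMap.ker (aeval T f)) = f.natDegree := by
  have := Submodule.finrank_sup_add_finrank_inf_eq (LinearMap.ker (aeval T f))
    (LinearMap.ker (aeval T g))
  rw [sup_ker_aeval_eq_ker_aeval_mul_of_coprime T hfg, h0, LinearMap.ker_zero, finrank_top,
    (disjoint_ker_aeval_of_isCoprime T hfg).eq_bot, finrank_bot] at this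
  omega

theorem ker_aeval_ne_bot [FiniteDimensional K V] {f g : K[X]} (hf : Irreducible f)
    (hfg : IsCoprime f g) (h0 : aeval T (f * g) = 0)
    (hfk : finrank K (LinearMap.ker (aeval T f)) ≤ f.natDegree)
    (hgk : finrank K (LinearMap.ker (aeval T g)) ≤ g.natDegree)
    (hV : finrank K V = f.natDegree + g.natDegree) :
    LinearMap.ker (aeval T f) ≠ ⊥ := by
  intro hbot
  have := finrank_ker_aeval_eq_natDegree T hfg h0 hfk hgk hV
  rw [hbot, finrank_bot] at this
  exact hf.natDegree_pos.ne this

theorem mem_invtSubmodule_and_ne_bot_and_ne_top_iff [FiniteDimensional K V] {f g : K[X]}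
    (hf : Irreducible f) (hg : Irreducible g) (hfg : IsCoprime f g) (h0 : aeval T (f * g) = 0)
    (hfk : finrank K (LinearMap.ker (aeval T f)) ≤ f.natDegree)
    (hgk : finrank K (LinearMap.ker (aeval T g)) ≤ g.natDegree)
    (hV : finrank K V = f.natDegree + g.natDegree) (W : Submodule K V) :
    (W ∈ T.invtSubmodule ∧ W ≠ ⊥ ∧ W ≠ ⊤) ↔
      W = LinearMap.ker (aeval T f) ∨ W = LinearMap.ker (aeval T g) := by
  have h0' : aeval T (g * f) = 0 := mul_comm f g ▸ h0
  have hV' : finrank K V = g.natDegree + f.natDegree := by omega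
  have hfne := ker_aeval_ne_bot T hf hfg h0 hfk hgk hV
  have hgne := ker_aeval_ne_bot T hg hfg.symm h0' hgk hfk hV'
  have hdisj := disjoint_ker_aeval_of_isCoprime T hfg
  have hsup : LinearMap.ker (aeval T f) ⊔ LinearMap.ker (aeval T g) = ⊤ := by
    rw [sup_ker_aeval_eq_ker_aeval_mul_of_coprime T hfg, h0, LinearMap.ker_zero]
  constructor
  · rintro ⟨hW, hW0, hWT⟩
    have hdec := le_inf_ker_aeval_sup_inf_ker_aeval T hfg h0 hW
    rcases disjoint_or_ker_aeval_le T hf hfk hW with hWf | hfW <;>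
      rcases disjoint_or_ker_aeval_le T hg hgk hW with hWg | hgW
    · rw [hWf.eq_bot, hWg.eq_bot, bot_sup_eq] at hdec
      exact absurd (le_bot_iff.1 hdec) hW0
    · rw [hWf.eq_bot, bot_sup_eq] at hdec
      exact Or.inr (le_antisymm (hdec.trans inf_le_right) hgW)
    · rw [hWg.eq_bot, sup_bot_eq] at hdec
      exact Or.inl (le_antisymm (hdec.trans inf_le_right) hfW)
    · exact absurd (top_le_iff.1 (hsup ▸ sup_le hfW hgW)) hWT
  · rintro (rfl | rfl)
    · exact ⟨ker_aeval_mem_invtSubmodule T f, hfne,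
        fun htop => hgne (top_disjoint.1 (htop ▸ hdisj))⟩
    · exact ⟨ker_aeval_mem_invtSubmodule T g, hgne,
        fun htop => hfne (disjoint_top.1 (htop ▸ hdisj))⟩

end Module.End

def rhoLin (r : ℕ) : Module.End (ZMod 3) (ZMod r → ZMod 3) where
  toFun := rhoAct r
  map_add' n m := by funext i; simp only [rhoAct, Pi.add_apply]; split_ifs <;> ring
  map_smul' c n := by
    funext i; simp only [rhoAct, Pi.smul_apply, smul_eq_mul, RingHom.id_apply]; split_ifs <;> ring

-- `rhoAct r` becomes the left shift on this `r`-antiperiodic sequence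
def unroll (r : ℕ) : (ZMod r → ZMod 3) →ₗ[ZMod 3] (ℕ → ZMod 3) where
  toFun n j := (-1) ^ (j / r) * n j
  map_add' n m := by funext j; simp [mul_add]
  map_smul' c n := by funext j; simp only [Pi.smul_apply, smul_eq_mul, RingHom.id_apply]; ring

section unroll

variable {r : ℕ}

theorem unroll_apply (n : ZMod r → ZMod 3) (j : ℕ) : unroll r n j = (-1) ^ (j / r) * n j := rfl

theorem unroll_of_lt (n : ZMod r → ZMod 3) {j : ℕ} (hj : j < r) : unroll r n j = n j := by
  simp [unroll_apply, Nat.div_eq_of_lt hj]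

theorem unroll_rhoLin (n : ZMod r → ZMod 3) (j : ℕ) :
    unroll r (rhoLin r n) j = unroll r n (j + 1) := by
  have hcast : (j : ZMod r) + 1 = ((j + 1 : ℕ) : ZMod r) := by push_cast; rfl
  rw [unroll_apply, unroll_apply, Nat.succ_div]
  change _ * rhoAct r n j = _
  rw [rhoAct, hcast]
  by_cases h : r ∣ j + 1
  · rw [if_pos ((ZMod.natCast_eq_zero_iff _ _).2 h), if_pos h, pow_add]; ring
  · rw [if_neg (mt (ZMod.natCast_eq_zero_iff _ _).1 h), if_neg h, add_zero]

theorem unroll_pow_rhoLin (k : ℕ) (n : ZMod r → ZMod 3) (j : ℕ) :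
    unroll r ((rhoLin r ^ k) n) j = unroll r n (j + k) := by
  induction k generalizing j with
  | zero => rfl
  | succ k ih => rw [pow_succ', Module.End.mul_apply, unroll_rhoLin, ih, add_right_comm]; rfl

variable [NeZero r]

theorem unroll_add_self (n : ZMod r → ZMod 3) (j : ℕ) : unroll r n (j + r) = -unroll r n j := by
  simp [unroll_apply, Nat.add_div_right _ (NeZero.pos r), pow_succ]

theorem unroll_injective : Function.Injective (unroll r) := by
  intro n m h
  funext i
  simpa [unroll_of_lt _ (ZMod.val_lt i)] using congrFun h i.val

theorem aeval_rhoLin_X_pow_add_one : aeval (rhoLin r) (X ^ r + 1 : (ZMod 3)[X]) = 0 := by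
  refine LinearMap.ext fun n => unroll_injective ?_
  funext j
  simp [unroll_pow_rhoLin, unroll_add_self]

end unroll

noncomputable def recurrencePoly (q : ℕ) (ε : ZMod 3) : (ZMod 3)[X] := X ^ (2 * q) + C ε * X ^ q - 1

section recurrencePoly

variable {q : ℕ} {ε : ZMod 3}

theorem natDegree_recurrencePoly [NeZero q] (ε : ZMod 3) :
    (recurrencePoly q ε).natDegree = 2 * q := by
  have hq := NeZero.ne q
  unfold recurrencePoly
  compute_degree!
  all_goals first | omega | simp [show 2 * q ≠ q by omega, hq]

theorem recurrencePoly_monic [NeZero q] (ε : ZMod 3) : (recurrencePoly q ε).Monic := by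
  have hq := NeZero.ne q
  unfold recurrencePoly
  monicity!
  simp [show ¬ 2 * q ≤ q by omega, show q ≤ 2 * q by omega, hq]

theorem recurrencePoly_mul_recurrencePoly_neg (hε : ε ^ 2 = 1) :
    recurrencePoly q ε * recurrencePoly q (-ε) = X ^ (4 * q) + 1 := by
  have h3 : (3 : (ZMod 3)[X]) = 0 := by exact_mod_cast CharP.cast_eq_zero (ZMod 3)[X] 3
  have hC : C ε ^ 2 = 1 := by rw [← map_pow, hε, map_one]
  simp only [recurrencePoly, map_neg]
  linear_combination (-X ^ (2 * q)) * h3 + (-X ^ (2 * q)) * hC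

theorem isCoprime_recurrencePoly_recurrencePoly_neg (hε : ε ^ 2 = 1) :
    IsCoprime (recurrencePoly q ε) (recurrencePoly q (-ε)) := by
  have h3 : (3 : (ZMod 3)[X]) = 0 := by exact_mod_cast CharP.cast_eq_zero (ZMod 3)[X] 3
  have hC : C ε ^ 2 = 1 := by rw [← map_pow, hε, map_one]
  refine ⟨1 - C ε * X ^ q, 1 + C ε * X ^ q, ?_⟩
  simp only [recurrencePoly, map_neg]
  linear_combination (-1 : (ZMod 3)[X]) * h3 + (-2 * X ^ (2 * q)) * hC

theorem unroll_aeval_recurrencePoly {r : ℕ} (n : ZMod r → ZMod 3) (j : ℕ) :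
    unroll r (aeval (rhoLin r) (recurrencePoly q ε) n) j =
      unroll r n (j + 2 * q) + ε * unroll r n (j + q) - unroll r n j := by
  simp [recurrencePoly, unroll_pow_rhoLin]

end recurrencePoly

def blockSet (r : ℕ) (ε : ZMod 3) : Set (ZMod r → ZMod 3) :=
  {n | ∃ x y : Fin (r / 4) → ZMod 3, ∀ i : Fin (r / 4),
    n ((i : ℕ) : ZMod r) = ε * x i + y i ∧
    n ((((i : ℕ) + r / 4 : ℕ)) : ZMod r) = x i ∧
    n ((((i : ℕ) + r / 2 : ℕ)) : ZMod r) = y i ∧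
    n ((((i : ℕ) + 3 * (r / 4) : ℕ)) : ZMod r) = x i - ε * y i}

section kernel

variable {q : ℕ} {ε : ZMod 3}

theorem Nset_eq_blockSet (r : ℕ) : Nset r = blockSet r 1 := by
  simp [Nset, blockSet]

theorem NstarSet_eq_blockSet (r : ℕ) : NstarSet r = blockSet r (-1) := by
  simp [NstarSet, blockSet]

theorem mem_blockSet_iff {n : ZMod (4 * q) → ZMod 3} :
    n ∈ blockSet (4 * q) ε ↔
      ∀ j < 2 * q,
        n ((j + 2 * q : ℕ) : ZMod (4 * q)) + ε * n ((j + q : ℕ) : ZMod (4 * q)) = n j := by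
  simp only [blockSet, Set.mem_ofPred_eq, show 4 * q / 4 = q by omega,
    show 4 * q / 2 = 2 * q by omega]
  constructor
  · rintro ⟨x, y, hxy⟩ j hj
    obtain hj | ⟨i, hi, rfl⟩ : j < q ∨ ∃ i < q, j = i + q :=
      (lt_or_ge j q).imp_right fun hj => ⟨j - q, by omega, by omega⟩
    · obtain ⟨h0, h1, h2, -⟩ := hxy ⟨j, by omega⟩
      rw [h0, h1, h2]; ring
    · obtain ⟨-, h1, h2, h3⟩ := hxy ⟨i, by omega⟩
      rw [show i + q + 2 * q = i + 3 * q by ring, show i + q + q = i + 2 * q by ring, h1, h2, h3]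
      ring
  · intro h
    refine ⟨fun i => n ((i + q : ℕ) : ZMod (4 * q)), fun i => n ((i + 2 * q : ℕ) : ZMod (4 * q)),
      fun i => ⟨?_, rfl, rfl, ?_⟩⟩
    · linear_combination -h i (by omega)
    · have hrec := h (i + q) (by omega)
      rw [show (i : ℕ) + q + 2 * q = i + 3 * q by ring, show (i : ℕ) + q + q = i + 2 * q by ring]
        at hrec
      linear_combination hrec

variable [NeZero q]

theorem eq_zero_of_mem_ker_of_forall_lt {n : ZMod (4 * q) → ZMod 3}
    (hn : n ∈ LinearMap.ker (aeval (rhoLin (4 * q)) (recurrencePoly q ε)))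
    (h : ∀ j < 2 * q, n j = 0) : n = 0 := by
  have hq := NeZero.ne q
  suffices hu : ∀ j, unroll (4 * q) n j = 0 from
    unroll_injective (by rw [map_zero]; exact funext hu)
  intro j
  induction j using Nat.strong_induction_on with
  | _ j ih =>
    obtain hj | ⟨i, rfl⟩ : j < 2 * q ∨ ∃ i, j = i + 2 * q :=
      (lt_or_ge j (2 * q)).imp_right fun hj => ⟨j - 2 * q, by omega⟩
    · rw [unroll_of_lt n (by omega), h j hj]
    · have hrec := unroll_aeval_recurrencePoly (q := q) (ε := ε) n i
      rw [LinearMap.mem_ker.1 hn, map_zero, Pi.zero_apply, ih i (by omega),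
        ih (i + q) (by omega)] at hrec
      linear_combination -hrec

theorem finrank_ker_aeval_recurrencePoly_le (ε : ZMod 3) :
    finrank (ZMod 3) (LinearMap.ker (aeval (rhoLin (4 * q)) (recurrencePoly q ε))) ≤ 2 * q := by
  let restrict := (LinearMap.pi fun j : Fin (2 * q) => LinearMap.proj ((j : ℕ) : ZMod (4 * q))) ∘ₗ
    (LinearMap.ker (aeval (rhoLin (4 * q)) (recurrencePoly q ε))).subtype
  have hinj : Function.Injective restrict :=
    (injective_iff_map_eq_zero restrict).2 fun ⟨n, hn⟩ h0 =>
      Subtype.ext (eq_zero_of_mem_ker_of_forall_lt hn fun j hj => congrFun h0 ⟨j, hj⟩)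
  simpa using LinearMap.finrank_le_finrank_of_injective hinj

theorem mem_ker_aeval_recurrencePoly_iff (hε : ε ^ 2 = 1) {n : ZMod (4 * q) → ZMod 3} :
    n ∈ LinearMap.ker (aeval (rhoLin (4 * q)) (recurrencePoly q ε)) ↔
      ∀ j < 2 * q,
        n ((j + 2 * q : ℕ) : ZMod (4 * q)) + ε * n ((j + q : ℕ) : ZMod (4 * q)) = n j := by
  constructor
  · intro hn j hj
    have hrec := unroll_aeval_recurrencePoly (q := q) (ε := ε) n j
    rw [LinearMap.mem_ker.1 hn, map_zero, Pi.zero_apply, unroll_of_lt n (by omega),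
      unroll_of_lt n (by omega), unroll_of_lt n (by omega)] at hrec
    linear_combination -hrec
  · intro h
    -- `recurrencePoly q ε (ρ) n` lies in the kernel of the complementary factor, and vanishes
    -- on `[0, 2q)`
    refine eq_zero_of_mem_ker_of_forall_lt (ε := -ε) ?_ fun j hj => ?_
    · rw [LinearMap.mem_ker, ← Module.End.mul_apply, ← map_mul, mul_comm (recurrencePoly q (-ε)),
        recurrencePoly_mul_recurrencePoly_neg hε, aeval_rhoLin_X_pow_add_one, LinearMap.zero_apply]
    · have hrec := unroll_aeval_recurrencePoly (q := q) (ε := ε) n j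
      rw [unroll_of_lt _ (by omega), unroll_of_lt n (by omega), unroll_of_lt n (by omega),
        unroll_of_lt n (by omega)] at hrec
      rw [hrec, h j hj, sub_self]

theorem coe_ker_aeval_recurrencePoly (hε : ε ^ 2 = 1) :
    (LinearMap.ker (aeval (rhoLin (4 * q)) (recurrencePoly q ε)) : Set (ZMod (4 * q) → ZMod 3)) =
      blockSet (4 * q) ε :=
  Set.ext fun _ => (mem_ker_aeval_recurrencePoly_iff hε).trans mem_blockSet_iff.symm

end kernel

theorem two_pow_succ_dvd_natCard_sub_one {L : Type*} [Field L] [Finite L] (hL : ringChar L ≠ 2)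
    {a : ℕ} {α : L} (hα : α ^ 2 ^ a = -1) : 2 ^ (a + 1) ∣ Nat.card L - 1 := by
  have := Fintype.ofFinite L
  have hα0 : α ≠ 0 := by
    rintro rfl
    simp at hα
  have hord : orderOf α = 2 ^ (a + 1) :=
    orderOf_eq_prime_pow (by rw [hα]; exact Ring.neg_one_ne_one_of_char_ne_two hL)
      (by rw [pow_succ, pow_mul, hα, neg_one_sq])
  rw [← hord, Nat.card_eq_fintype_card]
  exact orderOf_dvd_of_pow_eq_one (FiniteField.pow_card_sub_one_eq_one α hα0)

theorem two_pow_dvd_of_two_pow_succ_dvd_three_pow_sub_one {a d : ℕ} (ha : 2 ≤ a)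
    (hd : 2 ^ (a + 1) ∣ 3 ^ d - 1) : 2 ^ (a - 1) ∣ d := by
  rcases Nat.eq_zero_or_pos d with rfl | hd0
  · exact dvd_zero _
  have h4 : 4 ∣ 3 ^ d - 1 := (pow_dvd_pow 2 (by omega : 2 ≤ a + 1)).trans hd
  -- `3 ^ d ≡ 3 [MOD 4]` for odd `d`
  have heven : Even d := by
    by_contra hodd
    obtain ⟨k, rfl⟩ := Nat.not_even_iff_odd.1 hodd
    have h9 : 9 ^ k % 4 = 1 := by rw [Nat.pow_mod]; simp
    rw [show 3 ^ (2 * k + 1) = 9 ^ k * 3 by rw [pow_succ, pow_mul]; norm_num] at h4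
    omega
  have hlte := padicValNat.pow_two_sub_one (x := 3) (by norm_num) (by norm_num) hd0.ne' heven
  have hv : a + 1 ≤ padicValNat 2 (3 ^ d - 1) :=
    (padicValNat_dvd_iff_le (Nat.sub_ne_zero_of_lt (Nat.one_lt_pow hd0.ne' (by norm_num)))).1 hd
  have h4v : padicValNat 2 (3 + 1) = 2 := by
    rw [show 3 + 1 = 2 ^ 2 by rfl, padicValNat.prime_pow]
  have h2v : padicValNat 2 (3 - 1) = 1 := padicValNat.self (by norm_num)
  exact (pow_dvd_pow 2 (by omega)).trans pow_padicValNat_dvd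

theorem two_pow_le_natDegree_of_dvd_X_pow_add_one {a : ℕ} (ha : 2 ≤ a) {p : (ZMod 3)[X]}
    (hp : Irreducible p) (hdvd : p ∣ X ^ 2 ^ a + 1) : 2 ^ (a - 1) ≤ p.natDegree := by
  have : Fact (Irreducible p) := ⟨hp⟩
  have hp0 := hp.ne_zero
  have : Module.Finite (ZMod 3) (AdjoinRoot p) := (AdjoinRoot.powerBasis hp0).finite
  have : Finite (AdjoinRoot p) := Module.finite_of_finite (ZMod 3)
  have : CharP (AdjoinRoot p) 3 :=
    charP_of_injective_algebraMap (algebraMap (ZMod 3) (AdjoinRoot p)).injective 3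
  have hcard : Nat.card (AdjoinRoot p) = 3 ^ p.natDegree := by
    rw [Module.natCard_eq_pow_finrank (K := ZMod 3), Nat.card_zmod,
      (AdjoinRoot.powerBasis hp0).finrank, AdjoinRoot.powerBasis_dim]
  have hroot : AdjoinRoot.root p ^ 2 ^ a = -1 := by
    rw [eq_neg_iff_add_eq_zero]
    simpa using AdjoinRoot.mk_eq_zero.2 hdvd
  have := two_pow_succ_dvd_natCard_sub_one (by rw [ringChar.eq (AdjoinRoot p) 3]; norm_num) hroot
  rw [hcard] at this
  exact Nat.le_of_dvd hp.natDegree_pos (two_pow_dvd_of_two_pow_succ_dvd_three_pow_sub_one ha this)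

theorem irreducible_recurrencePoly {a q : ℕ} [NeZero q] (ha : 2 ≤ a) (hq : 4 * q = 2 ^ a)
    {ε : ZMod 3} (hε : ε ^ 2 = 1) : Irreducible (recurrencePoly q ε) := by
  have h2q : 2 * q = 2 ^ (a - 1) := by
    have : 2 ^ a = 2 * 2 ^ (a - 1) := by rw [← pow_succ', Nat.sub_add_cancel (by omega)]
    omega
  obtain ⟨p, hpm, hp, hpd⟩ := exists_monic_irreducible_factor (recurrencePoly q ε)
    (not_isUnit_of_natDegree_pos _ (by rw [natDegree_recurrencePoly, h2q]; positivity))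
  have hle := two_pow_le_natDegree_of_dvd_X_pow_add_one ha hp
    (hpd.trans ⟨_, by rw [recurrencePoly_mul_recurrencePoly_neg hε, hq]⟩)
  rwa [eq_of_monic_of_dvd_of_natDegree_le hpm (recurrencePoly_monic ε) hpd
    (by rwa [natDegree_recurrencePoly, h2q])]

theorem stmt_11 (a : ℕ) (ha : 2 ≤ a) (r : ℕ) (hr : r = 2 ^ a)
    (H : AddSubgroup (ZMod r → ZMod 3)) :
    ((∀ n ∈ H, rhoAct r n ∈ H) ∧ H ≠ ⊥ ∧ H ≠ ⊤) ↔
      ((H : Set (ZMod r → ZMod 3)) = Nset r ∨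
       (H : Set (ZMod r → ZMod 3)) = NstarSet r) := by
  obtain ⟨q, rfl⟩ : ∃ q, r = 4 * q :=
    ⟨2 ^ (a - 2), by rw [hr, show 4 = 2 ^ 2 by rfl, ← pow_add]; congr 1; omega⟩
  have : NeZero q := ⟨by have := Nat.two_pow_pos a; omega⟩
  have hclass := (rhoLin (4 * q)).mem_invtSubmodule_and_ne_bot_and_ne_top_iff
    (irreducible_recurrencePoly ha hr (one_pow 2)) (irreducible_recurrencePoly ha hr neg_one_sq)
    (isCoprime_recurrencePoly_recurrencePoly_neg (one_pow 2))
    (by rw [recurrencePoly_mul_recurrencePoly_neg (one_pow 2), aeval_rhoLin_X_pow_add_one])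
    ((finrank_ker_aeval_recurrencePoly_le 1).trans_eq (natDegree_recurrencePoly 1).symm)
    ((finrank_ker_aeval_recurrencePoly_le (-1)).trans_eq (natDegree_recurrencePoly (-1)).symm)
    (by rw [natDegree_recurrencePoly, natDegree_recurrencePoly, finrank_fintype_fun_eq_card,
      ZMod.card]; ring)
    (AddSubgroup.toZModSubmodule 3 H)
  rw [Nset_eq_blockSet, NstarSet_eq_blockSet, ← coe_ker_aeval_recurrencePoly (one_pow 2),
    ← coe_ker_aeval_recurrencePoly neg_one_sq]
  refine (and_congr Iff.rfl (and_congr ?_ ?_)).trans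
    (hclass.trans (or_congr SetLike.coe_set_eq.symm SetLike.coe_set_eq.symm))
  · exact not_congr (map_eq_bot_iff (AddSubgroup.toZModSubmodule 3)).symm
  · exact not_congr (map_eq_top_iff (AddSubgroup.toZModSubmodule 3)).symm
end

section
/- With r a power of 2, r ≥ 4, and N = {(x+y, x, y, x−y) : x,y ∈ ℤ₃^{r/4}} ≤ ℤ₃^r, the normalizer of N in V = ⟨−1⟩^r (acting coordinatewise by inversion) equals Λ = {(v,v,v,v) : v ∈ ⟨−1⟩^{r/4}}. -/
/-- g ∈ V = 𝔽₂^r acts on S = ℤ₃^r coordinatewise, the value 1 acting by negation. -/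
def actV {r : ℕ} (g : ZMod r → ZMod 2) (n : ZMod r → ZMod 3) : ZMod r → ZMod 3 :=
  fun i => if g i = 1 then -n i else n i

theorem stmt_14 (a : ℕ) (ha : 2 ≤ a) (r : ℕ) (hr : r = 2 ^ a) :
    -- the normaliser of N in V equals Λ = {(v,v,v,v) : v ∈ 𝔽₂^{r/4}}:
    {g : ZMod r → ZMod 2 | ∀ n, n ∈ Nset r ↔ actV g n ∈ Nset r} =
      {g : ZMod r → ZMod 2 | ∀ i, g i = g (i + ((r / 4 : ℕ) : ZMod r))} := by
  have h4 : 4 ∣ r := by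
    rw [hr]; exact (show (2:ℕ)^2 = 4 from by norm_num) ▸ pow_dvd_pow 2 ha
  have hq : 4 * (r / 4) = r := Nat.mul_div_cancel' h4
  have hr4 : 4 ≤ r := by
    rw [hr]
    calc (4:ℕ) = 2^2 := by norm_num
      _ ≤ 2^a := Nat.pow_le_pow_right (by norm_num) ha
  have hq0 : 0 < r / 4 := by omega
  haveI : NeZero r := ⟨by omega⟩
  have hval : ∀ m : ℕ, m < r → ((m : ZMod r)).val = m := fun m hm => ZMod.val_cast_of_lt hm
  have sign_inj : ∀ u v : ZMod 2,
      ((if u = 1 then (-1 : ZMod 3) else 1) = (if v = 1 then -1 else 1)) → u = v := by decide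
  have heval : ∀ m p k : ℕ, m < r/4 → k < 4 → p = m + k*(r/4) →
      ((p : ZMod r)).val % (r/4) = m ∧ ((p : ZMod r)).val / (r/4) = k := by
    intro m p k hm hk hp
    have hlt : p < r := by
      have h3 : k * (r/4) ≤ 3 * (r/4) := Nat.mul_le_mul_right _ (by omega)
      omega
    rw [hval p hlt, hp]
    constructor
    · rw [Nat.add_mul_mod_self_right, Nat.mod_eq_of_lt hm]
    · rw [Nat.add_mul_div_right _ _ hq0, Nat.div_eq_of_lt hm]; omega
  ext g
  simp only [Set.mem_setOf_eq]
  constructor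
  · intro h
    simp only [Nset, Set.mem_setOf_eq] at h
    have key : ∀ i₀ : ℕ, i₀ < r/4 →
        g ((i₀ : ZMod r)) = g (((i₀ + r/4 : ℕ) : ZMod r)) ∧
        g (((i₀ + r/4 : ℕ) : ZMod r)) = g (((i₀ + r/2 : ℕ) : ZMod r)) ∧
        g (((i₀ + r/2 : ℕ) : ZMod r)) = g (((i₀ + 3*(r/4) : ℕ) : ZMod r)) := by
      intro i₀ hi₀
      have hIval : (((⟨i₀, hi₀⟩ : Fin (r/4)) : ℕ)) = i₀ := rfl
      -- first test element: blocks (1,1,0,1) at coordinate i₀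
      have mem1 : ∃ x y : Fin (r / 4) → ZMod 3, ∀ i : Fin (r / 4),
          (if (((i:ℕ) : ℕ) : ZMod r).val % (r/4) = i₀ then (if (((i:ℕ) : ℕ) : ZMod r).val / (r/4) = 2 then (0:ZMod 3) else 1) else 0) = x i + y i ∧
          (if (((i:ℕ) + r/4 : ℕ) : ZMod r).val % (r/4) = i₀ then (if (((i:ℕ) + r/4 : ℕ) : ZMod r).val / (r/4) = 2 then (0:ZMod 3) else 1) else 0) = x i ∧
          (if (((i:ℕ) + r/2 : ℕ) : ZMod r).val % (r/4) = i₀ then (if (((i:ℕ) + r/2 : ℕ) : ZMod r).val / (r/4) = 2 then (0:ZMod 3) else 1) else 0) = y i ∧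
          (if (((i:ℕ) + 3*(r/4) : ℕ) : ZMod r).val % (r/4) = i₀ then (if (((i:ℕ) + 3*(r/4) : ℕ) : ZMod r).val / (r/4) = 2 then (0:ZMod 3) else 1) else 0) = x i - y i := by
        refine ⟨fun i => if (i:ℕ) = i₀ then 1 else 0, fun _ => 0, fun i => ?_⟩
        rw [(heval (i:ℕ) _ 0 i.isLt (by norm_num) (by ring)).1,
            (heval (i:ℕ) _ 0 i.isLt (by norm_num) (by ring)).2,
            (heval (i:ℕ) _ 1 i.isLt (by norm_num) (by ring)).1,
            (heval (i:ℕ) _ 1 i.isLt (by norm_num) (by ring)).2,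
            (heval (i:ℕ) _ 2 i.isLt (by norm_num) (by omega)).1,
            (heval (i:ℕ) _ 2 i.isLt (by norm_num) (by omega)).2,
            (heval (i:ℕ) _ 3 i.isLt (by norm_num) (by ring)).1,
            (heval (i:ℕ) _ 3 i.isLt (by norm_num) (by ring)).2]
        by_cases hii : (i:ℕ) = i₀ <;> simp [hii]
      obtain ⟨x1, y1, hE⟩ := (h (fun j : ZMod r => if j.val % (r/4) = i₀ then
        (if j.val / (r/4) = 2 then (0:ZMod 3) else 1) else 0)).mp mem1
      obtain ⟨E0, E1, E2, E3⟩ := hE ⟨i₀, hi₀⟩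
      simp only [actV, hIval] at E0 E1 E2 E3
      rw [(heval i₀ _ 0 hi₀ (by norm_num) (by ring)).1,
          (heval i₀ _ 0 hi₀ (by norm_num) (by ring)).2] at E0
      rw [(heval i₀ _ 1 hi₀ (by norm_num) (by ring)).1,
          (heval i₀ _ 1 hi₀ (by norm_num) (by ring)).2] at E1
      rw [(heval i₀ _ 2 hi₀ (by norm_num) (by omega)).1,
          (heval i₀ _ 2 hi₀ (by norm_num) (by omega)).2] at E2
      rw [(heval i₀ _ 3 hi₀ (by norm_num) (by ring)).1,
          (heval i₀ _ 3 hi₀ (by norm_num) (by ring)).2] at E3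
      simp only [eq_self_iff_true, if_true, neg_zero, ite_self, neg_neg,
        show ((0:ℕ) = 2) ↔ False from by norm_num, show ((1:ℕ) = 2) ↔ False from by norm_num,
        show ((3:ℕ) = 2) ↔ False from by norm_num, if_false] at E0 E1 E2 E3
      -- second test element: blocks (1,0,1,-1) at coordinate i₀
      have mem2 : ∃ x y : Fin (r / 4) → ZMod 3, ∀ i : Fin (r / 4),
          (if (((i:ℕ) : ℕ) : ZMod r).val % (r/4) = i₀ then (if (((i:ℕ) : ℕ) : ZMod r).val / (r/4) = 1 then (0:ZMod 3) else if (((i:ℕ) : ℕ) : ZMod r).val / (r/4) = 3 then -1 else 1) else 0) = x i + y i ∧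
          (if (((i:ℕ) + r/4 : ℕ) : ZMod r).val % (r/4) = i₀ then (if (((i:ℕ) + r/4 : ℕ) : ZMod r).val / (r/4) = 1 then (0:ZMod 3) else if (((i:ℕ) + r/4 : ℕ) : ZMod r).val / (r/4) = 3 then -1 else 1) else 0) = x i ∧
          (if (((i:ℕ) + r/2 : ℕ) : ZMod r).val % (r/4) = i₀ then (if (((i:ℕ) + r/2 : ℕ) : ZMod r).val / (r/4) = 1 then (0:ZMod 3) else if (((i:ℕ) + r/2 : ℕ) : ZMod r).val / (r/4) = 3 then -1 else 1) else 0) = y i ∧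
          (if (((i:ℕ) + 3*(r/4) : ℕ) : ZMod r).val % (r/4) = i₀ then (if (((i:ℕ) + 3*(r/4) : ℕ) : ZMod r).val / (r/4) = 1 then (0:ZMod 3) else if (((i:ℕ) + 3*(r/4) : ℕ) : ZMod r).val / (r/4) = 3 then -1 else 1) else 0) = x i - y i := by
        refine ⟨fun _ => 0, fun i => if (i:ℕ) = i₀ then 1 else 0, fun i => ?_⟩
        rw [(heval (i:ℕ) _ 0 i.isLt (by norm_num) (by ring)).1,
            (heval (i:ℕ) _ 0 i.isLt (by norm_num) (by ring)).2,
            (heval (i:ℕ) _ 1 i.isLt (by norm_num) (by ring)).1,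
            (heval (i:ℕ) _ 1 i.isLt (by norm_num) (by ring)).2,
            (heval (i:ℕ) _ 2 i.isLt (by norm_num) (by omega)).1,
            (heval (i:ℕ) _ 2 i.isLt (by norm_num) (by omega)).2,
            (heval (i:ℕ) _ 3 i.isLt (by norm_num) (by ring)).1,
            (heval (i:ℕ) _ 3 i.isLt (by norm_num) (by ring)).2]
        by_cases hii : (i:ℕ) = i₀ <;> simp [hii]
      obtain ⟨x2, y2, hF⟩ := (h (fun j : ZMod r => if j.val % (r/4) = i₀ then
        (if j.val / (r/4) = 1 then (0:ZMod 3) else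
          if j.val / (r/4) = 3 then -1 else 1) else 0)).mp mem2
      obtain ⟨F0, F1, F2, F3⟩ := hF ⟨i₀, hi₀⟩
      simp only [actV, hIval] at F0 F1 F2 F3
      rw [(heval i₀ _ 0 hi₀ (by norm_num) (by ring)).1,
          (heval i₀ _ 0 hi₀ (by norm_num) (by ring)).2] at F0
      rw [(heval i₀ _ 1 hi₀ (by norm_num) (by ring)).1,
          (heval i₀ _ 1 hi₀ (by norm_num) (by ring)).2] at F1
      rw [(heval i₀ _ 2 hi₀ (by norm_num) (by omega)).1,
          (heval i₀ _ 2 hi₀ (by norm_num) (by omega)).2] at F2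
      rw [(heval i₀ _ 3 hi₀ (by norm_num) (by ring)).1,
          (heval i₀ _ 3 hi₀ (by norm_num) (by ring)).2] at F3
      simp only [eq_self_iff_true, if_true, neg_zero, ite_self, neg_neg,
        show ((0:ℕ) = 1) ↔ False from by norm_num, show ((0:ℕ) = 3) ↔ False from by norm_num,
        show ((2:ℕ) = 1) ↔ False from by norm_num, show ((2:ℕ) = 3) ↔ False from by norm_num,
        show ((3:ℕ) = 1) ↔ False from by norm_num, if_false] at F0 F1 F2 F3
      -- extract sign equalities
      have A01 : g ((i₀ : ZMod r)) = g (((i₀ + r/4 : ℕ) : ZMod r)) := by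
        apply sign_inj
        rw [E0, E1, ← E2, add_zero]
      have B02 : g ((i₀ : ZMod r)) = g (((i₀ + r/2 : ℕ) : ZMod r)) := by
        apply sign_inj
        rw [F0, F2, ← F1, zero_add]
      have B23 : g (((i₀ + r/2 : ℕ) : ZMod r)) = g (((i₀ + 3*(r/4) : ℕ) : ZMod r)) := by
        apply sign_inj
        rw [F2]
        rw [← F1, zero_sub] at F3
        by_cases hc : g (((i₀ + 3*(r/4) : ℕ) : ZMod r)) = 1 <;>
          simp only [hc, if_true, if_false, reduceIte] at F3 ⊢ <;>
          linear_combination F3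
      exact ⟨A01, A01.symm.trans B02, B23⟩
    intro i
    have hi : ((i.val : ℕ) : ZMod r) = i := ZMod.natCast_rightInverse i
    obtain ⟨k, i₀, hk, hi₀, hv⟩ : ∃ k i₀ : ℕ, k < 4 ∧ i₀ < r/4 ∧ i.val = i₀ + k * (r/4) := by
      refine ⟨i.val / (r/4), i.val % (r/4), ?_, Nat.mod_lt _ hq0, (Nat.mod_add_div' _ _).symm⟩
      by_contra hk
      push_neg at hk
      have h1 : 4 * (r/4) ≤ (i.val / (r/4)) * (r/4) := Nat.mul_le_mul_right _ hk
      have h2 : (i.val / (r/4)) * (r/4) ≤ i.val := Nat.div_mul_le_self _ _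
      have h3 : i.val < r := ZMod.val_lt i
      omega
    have e : i = ((i₀ + k * (r/4) : ℕ) : ZMod r) := by rw [← hv]; exact hi.symm
    rw [e, ← Nat.cast_add]
    interval_cases k
    · rw [show i₀ + 0 * (r/4) = i₀ from by ring]
      exact (key i₀ hi₀).1
    · rw [show i₀ + 1 * (r/4) + r/4 = i₀ + r/2 from by omega,
          show i₀ + 1 * (r/4) = i₀ + r/4 from by ring]
      exact (key i₀ hi₀).2.1
    · rw [show i₀ + 2 * (r/4) + r/4 = i₀ + 3*(r/4) from by omega,
          show i₀ + 2 * (r/4) = i₀ + r/2 from by omega]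
      exact (key i₀ hi₀).2.2
    · rw [show i₀ + 3 * (r/4) + r/4 = i₀ + r from by omega,
          show ((i₀ + r : ℕ) : ZMod r) = ((i₀ : ℕ) : ZMod r) from by
            push_cast [ZMod.natCast_self]; ring]
      exact ((key i₀ hi₀).1.trans ((key i₀ hi₀).2.1.trans (key i₀ hi₀).2.2)).symm
  · intro hg
    have invol : ∀ m : ZMod r → ZMod 3, actV g (actV g m) = m := by
      intro m; funext j; simp only [actV]
      by_cases hj : g j = 1 <;> simp [hj]
    have hc : ∀ j : ZMod r, g (j + ((r/4 : ℕ) : ZMod r)) = g j := fun j => (hg j).symm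
    have fwd : ∀ m, m ∈ Nset r → actV g m ∈ Nset r := by
      intro m hm
      simp only [Nset, Set.mem_setOf_eq] at hm ⊢
      obtain ⟨x, y, hxy⟩ := hm
      refine ⟨fun i => if g (((i:ℕ) : ZMod r)) = 1 then -x i else x i,
              fun i => if g (((i:ℕ) : ZMod r)) = 1 then -y i else y i, fun i => ?_⟩
      obtain ⟨e0, e1, e2, e3⟩ := hxy i
      have g1 : g ((((i:ℕ) + r/4 : ℕ)) : ZMod r) = g (((i:ℕ) : ZMod r)) := by
        rw [Nat.cast_add]; exact hc _
      have g2 : g ((((i:ℕ) + r/2 : ℕ)) : ZMod r) = g (((i:ℕ) : ZMod r)) := by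
        rw [show ((i:ℕ) + r/2) = ((i:ℕ) + r/4) + r/4 from by omega, Nat.cast_add, hc,
            Nat.cast_add, hc]
      have g3 : g ((((i:ℕ) + 3*(r/4) : ℕ)) : ZMod r) = g (((i:ℕ) : ZMod r)) := by
        rw [show ((i:ℕ) + 3*(r/4)) = (((i:ℕ) + r/4) + r/4) + r/4 from by ring, Nat.cast_add,
            hc, Nat.cast_add, hc, Nat.cast_add, hc]
      refine ⟨?_, ?_, ?_, ?_⟩
      · simp only [actV, e0]
        by_cases hgi : g (((i:ℕ)) : ZMod r) = 1 <;> simp [hgi] <;> ring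
      · simp only [actV, g1, e1]
      · simp only [actV, g2, e2]
      · simp only [actV, g3, e3]
        by_cases hgi : g (((i:ℕ)) : ZMod r) = 1 <;> simp [hgi] <;> ring
    intro n
    constructor
    · exact fwd n
    · intro h'
      have h2 := fwd _ h'
      rwa [invol] at h2
end

section
/- Let G be a finite group acting transitively on a finite set Ω such that some abelian normal subgroup N of G has exactly two orbits on Ω, and let v, w be representatives of the two N-orbits with v^g = w for some g ∈ G. If x ∈ N_v has prime order, then x·x^g is a semiregular element of N. -/
theorem stmt_18 {Ω : Type*} [Fintype Ω] (G N : Subgroup (Equiv.Perm Ω))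
    (htrans : ∀ a b : Ω, ∃ g ∈ G, g a = b)
    (hNG : N ≤ G)
    (hnormal : ∀ g ∈ G, ∀ n ∈ N, g * n * g⁻¹ ∈ N)
    (habel : ∀ m ∈ N, ∀ n ∈ N, m * n = n * m)
    (v w : Ω)
    -- v and w lie in different N-orbits, and these two orbits cover Ω:
    (hdiff : ¬ ∃ n ∈ N, n v = w)
    (hcover : ∀ x : Ω, (∃ n ∈ N, n v = x) ∨ (∃ n ∈ N, n w = x))
    (g : Equiv.Perm Ω) (hgG : g ∈ G) (hgvw : g v = w)
    (x : Equiv.Perm Ω) (hxN : x ∈ N) (hxv : x v = v)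
    (hxord : ∃ p : ℕ, p.Prime ∧ orderOf x = p) :
    x * (g * x * g⁻¹) ∈ N ∧ Semiregular (x * (g * x * g⁻¹)) := by
  obtain ⟨p, hp, hord⟩ := hxord
  set x' := g * x * g⁻¹ with hx'def
  have hx'N : x' ∈ N := hnormal g hgG x hxN
  -- an element of N fixing a point fixes its whole N-orbit
  have key : ∀ n ∈ N, ∀ a : Ω, n a = a → ∀ m ∈ N, n (m a) = m a := by
    intro n hn a ha m hm
    have h : n * m = m * n := habel n hn m hm
    calc n (m a) = (n * m) a := rfl
      _ = (m * n) a := by rw [h]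
      _ = m (n a) := rfl
      _ = m a := by rw [ha]
  have fixall : ∀ n ∈ N, n v = v → n w = w → n = 1 := by
    intro n hn hv hw
    ext u
    rcases hcover u with ⟨m, hm, rfl⟩ | ⟨m, hm, rfl⟩
    · simpa using key n hn v hv m hm
    · simpa using key n hn w hw m hm
  have hx'w : x' w = w := by
    have : g⁻¹ w = v := by rw [← hgvw]; simp
    simp [hx'def, Equiv.Perm.mul_apply, this, hxv, hgvw]
  -- powers
  have hx'pow : ∀ k : ℕ, x' ^ k = g * x ^ k * g⁻¹ := by
    intro k
    rw [hx'def]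
    exact conj_pow ..
  have hxpowN : ∀ k : ℕ, x ^ k ∈ N := fun k => pow_mem hxN k
  have hx'powN : ∀ k : ℕ, x' ^ k ∈ N := fun k => pow_mem hx'N k
  have hxkv : ∀ k : ℕ, (x ^ k) v = v := by
    intro k
    induction k with
    | zero => simp
    | succ n ih => rw [pow_succ, Equiv.Perm.mul_apply, hxv, ih]
  have hx'kw : ∀ k : ℕ, (x' ^ k) w = w := by
    intro k
    induction k with
    | zero => simp
    | succ n ih => rw [pow_succ, Equiv.Perm.mul_apply, hx'w, ih]
  -- x^k = 1 ↔ x'^k = 1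
  have hconj1 : ∀ k : ℕ, x ^ k = 1 → x' ^ k = 1 := by
    intro k hk
    rw [hx'pow, hk]; group
  have hcomm : x * x' = x' * x := habel x hxN x' hx'N
  refine ⟨mul_mem hxN hx'N, ?_⟩
  intro k hk u hu
  -- (x*x')^k = x^k * x'^k
  have hpowsplit : (x * x') ^ k = x ^ k * x' ^ k :=
    Commute.mul_pow (hcomm : Commute x x') k
  have hxk1 : x ^ k ≠ 1 := by
    intro h
    exact hk (by rw [hpowsplit, h, hconj1 k h, one_mul])
  have hx'k1 : x' ^ k ≠ 1 := by
    intro h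
    apply hxk1
    rw [hx'pow] at h
    have h3 : x ^ k = g⁻¹ * (g * x ^ k * g⁻¹) * g := by group
    rw [h3, h]; group
  rw [hpowsplit] at hu
  rcases hcover u with ⟨m, hm, rfl⟩ | ⟨m, hm, rfl⟩
  · -- u in v-orbit
    have h1 : (x' ^ k) (m v) = (x' ^ k * m) v := rfl
    have h2 : (x ^ k) ((x' ^ k * m) v) = (x' ^ k * m) v :=
      key (x ^ k) (hxpowN k) v (hxkv k) (x' ^ k * m) (mul_mem (hx'powN k) hm)
    have : (x' ^ k) (m v) = m v := by
      have := hu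
      rw [Equiv.Perm.mul_apply, h1, h2, ← h1] at this
      exact this
    -- so x'^k fixes m v, hence fixes v
    have hfv : (x' ^ k) v = v := by
      have h3 := key (x' ^ k) (hx'powN k) (m v) this m⁻¹ (inv_mem hm)
      simpa using h3
    exact hx'k1 (fixall (x' ^ k) (hx'powN k) hfv (hx'kw k))
  · -- u in w-orbit
    have hxw : (x' ^ k) (m w) = (x' ^ k * m) w := rfl
    have h2 : (x' ^ k * m) w = m w := by
      rw [← hxw]; exact key (x' ^ k) (hx'powN k) w (hx'kw k) m hm
    have : (x ^ k) (m w) = m w := by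
      have := hu
      rw [Equiv.Perm.mul_apply, hxw, h2] at this
      exact this
    have hfw : (x ^ k) w = w := by
      have h3 := key (x ^ k) (hxpowN k) (m w) this m⁻¹ (inv_mem hm)
      simpa using h3
    exact hxk1 (fixall (x ^ k) (hxpowN k) (hxkv k) hfw)
end

section
/- Let Γ be a finite connected G-vertex-transitive graph of valency 4 such that the local group G_v^{Γ(v)} is isomorphic to Sym(3) (acting with orbits of sizes 1 and 3 on Γ(v)). Then for each vertex u there is a unique neighbour u' fixed by G_u, and the relation u ↦ u' satisfies G_u = G_{u'} and (u')' = u; consequently M = {{u, u'} : u ∈ V(Γ)} is a G-invariant perfect matching of Γ. -/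
/-!
The stabiliser `G_v` fixes exactly one neighbour `v'` of `v`: the one it fixes by hypothesis, and
no other, since it moves each of the remaining (at least two) neighbours onto any other one.
Being defined by `G`-invariant data, `v ↦ v'` commutes with `G`. Hence `G_v ≤ G_{v'}`, and these
two stabilisers are conjugate by vertex-transitivity, so by finiteness they are equal. Then `v` is a
neighbour of `v'` fixed by `G_{v'}`, which forces `v'' = v`.
-/

open Equiv MulAction

theorem MulAction.stabilizer_eq_of_le_of_mem_orbit {G α : Type*} [Group G] [MulAction G α]
    {a b : α} [Finite (stabilizer G a)] (hb : b ∈ orbit G a)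
    (hle : stabilizer G a ≤ stabilizer G b) : stabilizer G a = stabilizer G b := by
  obtain ⟨g, rfl⟩ := hb
  let e := stabilizerEquivStabilizer (G := G) (rfl : g • a = g • a)
  have : Finite (stabilizer G (g • a)) := Finite.of_equiv _ e.toEquiv
  exact Subgroup.eq_of_le_of_card_ge hle (Nat.card_congr e.toEquiv.symm).le

theorem Equiv.Perm.eq_of_forall_apply_eq_self_of_transitive_compl {X : Type*} [Fintype X]
    {S : Set (Perm X)} {w x : X} (hX : 3 ≤ Fintype.card X)
    (htrans : ∀ a b, a ≠ w → b ≠ w → ∃ e ∈ S, e a = b) (hx : ∀ e ∈ S, e x = x) : x = w := by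
  classical
  by_contra hxw
  obtain ⟨b, -, hb⟩ := Finset.exists_mem_notMem_of_card_lt_card
    (s := {w, x}) (t := Finset.univ) (by
      have := Finset.card_le_two (a := w) (b := x)
      rw [Finset.card_univ]; omega)
  simp only [Finset.mem_insert, Finset.mem_singleton, not_or] at hb
  obtain ⟨e, he, hex⟩ := htrans x b hxw hb.1
  exact hb.2 (hx e he ▸ hex).symm

namespace SimpleGraph

variable {V : Type*} (Γ : SimpleGraph V) (G : Subgroup (Perm V))

/-- The local group `G_v^{Γ(v)}`. -/
def localAction (v : V) : Set (Perm {u : V // Γ.Adj v u}) :=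
  {e | ∃ g ∈ G, g v = v ∧ ∀ u : {u : V // Γ.Adj v u}, (e u : V) = g (u : V)}

def IsFixedNeighbour (v w : V) : Prop :=
  Γ.Adj v w ∧ ∀ g ∈ G, g v = v → g w = w

variable {Γ G}

theorem IsFixedNeighbour.apply (hG : ∀ g ∈ G, ∀ u w : V, Γ.Adj u w ↔ Γ.Adj (g u) (g w))
    {v w : V} (h : Γ.IsFixedNeighbour G v w) {g : Perm V} (hg : g ∈ G) :
    Γ.IsFixedNeighbour G (g v) (g w) := by
  refine ⟨(hG g hg v w).mp h.1, fun k hk hkv => ?_⟩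
  have hconj : (g⁻¹ * k * g) v = v := by simp [Perm.mul_apply, hkv]
  have := h.2 _ (G.mul_mem (G.mul_mem (G.inv_mem hg) hk) hg) hconj
  rwa [Perm.mul_apply, Perm.mul_apply, Perm.inv_eq_iff_eq] at this

theorem isFixedNeighbour_iff [Fintype V] [DecidableRel Γ.Adj]
    (hG : ∀ g ∈ G, ∀ u w : V, Γ.Adj u w ↔ Γ.Adj (g u) (g w)) {v : V} (hv : 3 ≤ Γ.degree v)
    {w : {u : V // Γ.Adj v u}} (hfix : ∀ e ∈ Γ.localAction G v, e w = w)
    (htrans : ∀ u₁ u₂, u₁ ≠ w → u₂ ≠ w → ∃ e ∈ Γ.localAction G v, e u₁ = u₂) (x : V) :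
    Γ.IsFixedNeighbour G v x ↔ x = w := by
  constructor
  · rintro ⟨hx, hxfix⟩
    have hcard : 3 ≤ Fintype.card {u : V // Γ.Adj v u} := by
      rwa [← card_neighborSet_eq_degree] at hv
    have := Perm.eq_of_forall_apply_eq_self_of_transitive_compl (x := ⟨x, hx⟩) hcard htrans
      fun e ⟨g, hg, hgv, he⟩ => Subtype.ext ((he _).trans (hxfix g hg hgv))
    exact congrArg Subtype.val this
  · rintro rfl
    refine ⟨w.2, fun g hg hgv => ?_⟩
    have hperm : ∀ u, Γ.Adj v (g u) ↔ Γ.Adj v u := fun u => by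
      rw [hG g hg v u, hgv]
    exact congrArg Subtype.val (hfix (g.subtypePerm hperm) ⟨g, hg, hgv, fun _ => rfl⟩)

section FixedNeighbourMap

variable {f : V → V} (hf : ∀ v x, Γ.IsFixedNeighbour G v x ↔ x = f v)
include hf

theorem fixedNeighbourMap_equivariant (hG : ∀ g ∈ G, ∀ u w : V, Γ.Adj u w ↔ Γ.Adj (g u) (g w))
    {g : Perm V} (hg : g ∈ G) (u : V) : f (g u) = g (f u) :=
  ((hf _ _).mp (((hf u (f u)).mpr rfl).apply hG hg)).symm

theorem fixedNeighbourMap_apply_eq_self_iff [Finite V] {u : V} (hu : ∃ t ∈ G, t u = f u)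
    {g : Perm V} (hg : g ∈ G) : g u = u ↔ g (f u) = f u := by
  have hle : stabilizer G u ≤ stabilizer G (f u) := fun k hk => ((hf u (f u)).mpr rfl).2 k k.2 hk
  have horbit : f u ∈ orbit G u := by
    obtain ⟨t, ht, htu⟩ := hu
    exact ⟨⟨t, ht⟩, htu⟩
  have heq := stabilizer_eq_of_le_of_mem_orbit horbit hle
  exact ⟨fun h => hle (show (⟨g, hg⟩ : G) ∈ stabilizer G u from h),
    fun h => heq.ge (show (⟨g, hg⟩ : G) ∈ stabilizer G (f u) from h)⟩

theorem fixedNeighbourMap_involutive [Finite V] (htrans : ∀ a b : V, ∃ g ∈ G, g a = b) :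
    Function.Involutive f := by
  intro u
  refine ((hf (f u) u).mp ⟨((hf u (f u)).mpr rfl).1.symm, fun g hg h => ?_⟩).symm
  exact (fixedNeighbourMap_apply_eq_self_iff hf (htrans u (f u)) hg).mpr h

end FixedNeighbourMap

end SimpleGraph

theorem stmt_19_general {V : Type*} [Fintype V]
    (Γ : SimpleGraph V) [DecidableRel Γ.Adj]
    (hval : ∀ v : V, Γ.degree v = 4)
    (G : Subgroup (Equiv.Perm V))
    -- G consists of automorphisms of Γ:
    (hG : ∀ g ∈ G, ∀ u w : V, Γ.Adj u w ↔ Γ.Adj (g u) (g w))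
    -- G is vertex-transitive:
    (htrans : ∀ a b : V, ∃ g ∈ G, g a = b)
    -- the local group G_v^{Γ(v)} is Sym(3), acting with orbits of sizes 1 and 3;
    -- here L v denotes the set of permutations of Γ(v) induced by elements of G_v:
    (hlocal : ∀ v : V,
      ∃ w : {u : V // Γ.Adj v u},
        (∀ e : Equiv.Perm {u : V // Γ.Adj v u},
          (∃ g ∈ G, g v = v ∧ ∀ u : {u : V // Γ.Adj v u}, (e u : V) = g (u : V)) →
            e w = w) ∧
        (∀ u₁ u₂ : {u : V // Γ.Adj v u}, u₁ ≠ w → u₂ ≠ w →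
          ∃ e : Equiv.Perm {u : V // Γ.Adj v u},
            (∃ g ∈ G, g v = v ∧ ∀ u : {u : V // Γ.Adj v u}, (e u : V) = g (u : V)) ∧
            e u₁ = u₂) ∧
        Nat.card {e : Equiv.Perm {u : V // Γ.Adj v u} //
          ∃ g ∈ G, g v = v ∧ ∀ u : {u : V // Γ.Adj v u}, (e u : V) = g (u : V)} = 6) :
    -- conclusion: u ↦ u' is a well-defined map giving a G-invariant perfect matching
    ∃ f : V → V, ∀ u : V,
      Γ.Adj u (f u) ∧
      (∀ g ∈ G, g u = u → g (f u) = f u) ∧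
      -- f u is the unique neighbour of u fixed by G_u:
      (∀ w : V, Γ.Adj u w → (∀ g ∈ G, g u = u → g w = w) → w = f u) ∧
      f (f u) = u ∧
      -- G_u = G_{u'}:
      (∀ g ∈ G, (g u = u ↔ g (f u) = f u)) ∧
      -- the matching M = {{u, f u}} is G-invariant:
      (∀ g ∈ G, f (g u) = g (f u)) := by
  choose w hfix hmove _ using hlocal
  have hf : ∀ v x, Γ.IsFixedNeighbour G v x ↔ x = w v := fun v =>
    SimpleGraph.isFixedNeighbour_iff hG (v := v) (by rw [hval v]; norm_num) (hfix v) (hmove v)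
  refine ⟨fun v => w v, fun u => ?_⟩
  obtain ⟨hadj, hfixed⟩ := (hf u (w u)).mpr rfl
  exact ⟨hadj, hfixed, fun x hx hxfix => (hf u x).mp ⟨hx, hxfix⟩,
    SimpleGraph.fixedNeighbourMap_involutive hf htrans u,
    fun g hg => SimpleGraph.fixedNeighbourMap_apply_eq_self_iff hf (htrans u (w u)) hg,
    fun g hg => SimpleGraph.fixedNeighbourMap_equivariant hf hG hg u⟩

theorem stmt_19 {V : Type*} [Fintype V] [DecidableEq V]
    (Γ : SimpleGraph V) [DecidableRel Γ.Adj]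
    (hconn : Γ.Connected)
    (hval : ∀ v : V, Γ.degree v = 4)
    (G : Subgroup (Equiv.Perm V))
    -- G consists of automorphisms of Γ:
    (hG : ∀ g ∈ G, ∀ u w : V, Γ.Adj u w ↔ Γ.Adj (g u) (g w))
    -- G is vertex-transitive:
    (htrans : ∀ a b : V, ∃ g ∈ G, g a = b)
    -- the local group G_v^{Γ(v)} is Sym(3), acting with orbits of sizes 1 and 3;
    -- here L v denotes the set of permutations of Γ(v) induced by elements of G_v:
    (hlocal : ∀ v : V,
      ∃ w : {u : V // Γ.Adj v u},
        (∀ e : Equiv.Perm {u : V // Γ.Adj v u},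
          (∃ g ∈ G, g v = v ∧ ∀ u : {u : V // Γ.Adj v u}, (e u : V) = g (u : V)) →
            e w = w) ∧
        (∀ u₁ u₂ : {u : V // Γ.Adj v u}, u₁ ≠ w → u₂ ≠ w →
          ∃ e : Equiv.Perm {u : V // Γ.Adj v u},
            (∃ g ∈ G, g v = v ∧ ∀ u : {u : V // Γ.Adj v u}, (e u : V) = g (u : V)) ∧
            e u₁ = u₂) ∧
        Nat.card {e : Equiv.Perm {u : V // Γ.Adj v u} //
          ∃ g ∈ G, g v = v ∧ ∀ u : {u : V // Γ.Adj v u}, (e u : V) = g (u : V)} = 6) :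
    -- conclusion: u ↦ u' is a well-defined map giving a G-invariant perfect matching
    ∃ f : V → V, ∀ u : V,
      Γ.Adj u (f u) ∧
      (∀ g ∈ G, g u = u → g (f u) = f u) ∧
      -- f u is the unique neighbour of u fixed by G_u:
      (∀ w : V, Γ.Adj u w → (∀ g ∈ G, g u = u → g w = w) → w = f u) ∧
      f (f u) = u ∧
      -- G_u = G_{u'}:
      (∀ g ∈ G, (g u = u ↔ g (f u) = f u)) ∧
      -- the matching M = {{u, f u}} is G-invariant:
      (∀ g ∈ G, f (g u) = g (f u)) :=
  stmt_19_general Γ hval G hG htrans hlocal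
end
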